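/- arXiv:2504.12746 — 7 statements merged into one kernel-verified Lean document; each statement's English description precedes it below -/
import Mathlib

section
/- Let X₁, X₂ be sets with transitive relations <₁ on X₁ and <₂ on X₂ that agree on X₁ ∩ X₂. Let < be the transitive closure of <₁ ∪ <₂. Then < restricted to Xᵢ extends <ᵢ... moreover, for a ∈ X₁ \ X₂ and b ∈ X₂ \ X₁, a < b holds if and only if there exists c ∈ X₁ ∩ X₂ with a <₁ c and c <₂ b. -/
/-- Let X₁, X₂ be sets with transitive relations <₁ on X₁ and <₂ on X₂ agreeing
on X₁ ∩ X₂, and let < be the transitive closure of <₁ ∪ <₂.  Then < extends each <ᵢ, and for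
a ∈ X₁ \ X₂, b ∈ X₂ \ X₁, a < b iff there is c ∈ X₁ ∩ X₂ with a <₁ c <₂ b (and symmetrically). -/
theorem stmt_2 {α : Type*} (X₁ X₂ : Set α) (r₁ r₂ : α → α → Prop)
    (h₁dom : ∀ a b, r₁ a b → a ∈ X₁ ∧ b ∈ X₁)
    (h₂dom : ∀ a b, r₂ a b → a ∈ X₂ ∧ b ∈ X₂)
    (h₁trans : ∀ a b c, r₁ a b → r₁ b c → r₁ a c)
    (h₂trans : ∀ a b c, r₂ a b → r₂ b c → r₂ a c)
    (hagree : ∀ a ∈ X₁ ∩ X₂, ∀ b ∈ X₁ ∩ X₂, (r₁ a b ↔ r₂ a b)) :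
    (∀ a b, r₁ a b → Relation.TransGen (fun x y => r₁ x y ∨ r₂ x y) a b) ∧
    (∀ a b, r₂ a b → Relation.TransGen (fun x y => r₁ x y ∨ r₂ x y) a b) ∧
    (∀ a ∈ X₁ \ X₂, ∀ b ∈ X₂ \ X₁,
      (Relation.TransGen (fun x y => r₁ x y ∨ r₂ x y) a b ↔
        ∃ c ∈ X₁ ∩ X₂, r₁ a c ∧ r₂ c b)) ∧
    (∀ a ∈ X₂ \ X₁, ∀ b ∈ X₁ \ X₂,
      (Relation.TransGen (fun x y => r₁ x y ∨ r₂ x y) a b ↔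
        ∃ c ∈ X₁ ∩ X₂, r₂ a c ∧ r₁ c b)) := by
  set P : α → α → Prop := fun a b =>
    r₁ a b ∨ r₂ a b ∨ (∃ c, r₁ a c ∧ r₂ c b) ∨ (∃ c, r₂ a c ∧ r₁ c b) with hP
  have key : ∀ a b, Relation.TransGen (fun x y => r₁ x y ∨ r₂ x y) a b → P a b := by
    intro a b h
    induction h with
    | single h =>
      rcases h with h | h
      · exact Or.inl h
      · exact Or.inr (Or.inl h)
    | tail _ hstep ih =>
      rename_i b c _
      rcases ih with h | h | ⟨d, hd1, hd2⟩ | ⟨d, hd1, hd2⟩ <;> rcases hstep with hs | hs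
      · exact Or.inl (h₁trans _ _ _ h hs)
      · exact Or.inr (Or.inr (Or.inl ⟨b, h, hs⟩))
      · exact Or.inr (Or.inr (Or.inr ⟨b, h, hs⟩))
      · exact Or.inr (Or.inl (h₂trans _ _ _ h hs))
      · -- r₁ a d, r₂ d b, r₁ b c : d,b ∈ X₁∩X₂ so r₂ d b → r₁ d b
        have hd : d ∈ X₁ ∩ X₂ := ⟨(h₁dom _ _ hd1).2, (h₂dom _ _ hd2).1⟩
        have hb : b ∈ X₁ ∩ X₂ := ⟨(h₁dom _ _ hs).1, (h₂dom _ _ hd2).2⟩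
        have : r₁ d b := (hagree d hd b hb).mpr hd2
        exact Or.inl (h₁trans _ _ _ (h₁trans _ _ _ hd1 this) hs)
      · exact Or.inr (Or.inr (Or.inl ⟨d, hd1, h₂trans _ _ _ hd2 hs⟩))
      · exact Or.inr (Or.inr (Or.inr ⟨d, hd1, h₁trans _ _ _ hd2 hs⟩))
      · -- r₂ a d, r₁ d b, r₂ b c
        have hd : d ∈ X₁ ∩ X₂ := ⟨(h₁dom _ _ hd2).1, (h₂dom _ _ hd1).2⟩
        have hb : b ∈ X₁ ∩ X₂ := ⟨(h₁dom _ _ hd2).2, (h₂dom _ _ hs).1⟩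
        have : r₂ d b := (hagree d hd b hb).mp hd2
        exact Or.inr (Or.inl (h₂trans _ _ _ (h₂trans _ _ _ hd1 this) hs))
  refine ⟨fun a b h => Relation.TransGen.single (Or.inl h),
    fun a b h => Relation.TransGen.single (Or.inr h), ?_, ?_⟩
  · intro a ha b hb
    constructor
    · intro h
      rcases key a b h with h | h | ⟨c, hc1, hc2⟩ | ⟨c, hc1, hc2⟩
      · exact absurd (h₁dom _ _ h).2 hb.2
      · exact absurd (h₂dom _ _ h).1 ha.2
      · exact ⟨c, ⟨(h₁dom _ _ hc1).2, (h₂dom _ _ hc2).1⟩, hc1, hc2⟩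
      · exact absurd (h₂dom _ _ hc1).1 ha.2
    · rintro ⟨c, _, hc1, hc2⟩
      exact Relation.TransGen.tail (Relation.TransGen.single (Or.inl hc1)) (Or.inr hc2)
  · intro a ha b hb
    constructor
    · intro h
      rcases key a b h with h | h | ⟨c, hc1, hc2⟩ | ⟨c, hc1, hc2⟩
      · exact absurd (h₁dom _ _ h).1 ha.2
      · exact absurd (h₂dom _ _ h).2 hb.2
      · exact absurd (h₁dom _ _ hc1).1 ha.2
      · exact ⟨c, ⟨(h₁dom _ _ hc2).1, (h₂dom _ _ hc1).2⟩, hc1, hc2⟩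
    · rintro ⟨c, _, hc1, hc2⟩
      exact Relation.TransGen.tail (Relation.TransGen.single (Or.inr hc1)) (Or.inl hc2)
end

section
/- Let X₁, X₂ be sets with transitive and irreflexive relations <₁ on X₁ and <₂ on X₂ that agree on X₁ ∩ X₂, and suppose each <ᵢ is a strict partial order. Then the transitive closure < of <₁ ∪ <₂ restricted to Xᵢ is exactly <ᵢ (it extends <ᵢ and adds no new pairs within Xᵢ). -/
/-- If <₁, <₂ are strict partial orders (transitive and irreflexive) on X₁, X₂
agreeing on X₁ ∩ X₂, then the transitive closure < of <₁ ∪ <₂ restricted to Xᵢ is exactly <ᵢ. -/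
theorem stmt_3 {α : Type*} (X₁ X₂ : Set α) (r₁ r₂ : α → α → Prop)
    (h₁dom : ∀ a b, r₁ a b → a ∈ X₁ ∧ b ∈ X₁)
    (h₂dom : ∀ a b, r₂ a b → a ∈ X₂ ∧ b ∈ X₂)
    (h₁trans : ∀ a b c, r₁ a b → r₁ b c → r₁ a c)
    (h₂trans : ∀ a b c, r₂ a b → r₂ b c → r₂ a c)
    (h₁irr : ∀ a, ¬ r₁ a a) (h₂irr : ∀ a, ¬ r₂ a a)
    (hagree : ∀ a ∈ X₁ ∩ X₂, ∀ b ∈ X₁ ∩ X₂, (r₁ a b ↔ r₂ a b)) :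
    (∀ a ∈ X₁, ∀ b ∈ X₁,
      (Relation.TransGen (fun x y => r₁ x y ∨ r₂ x y) a b ↔ r₁ a b)) ∧
    (∀ a ∈ X₂, ∀ b ∈ X₂,
      (Relation.TransGen (fun x y => r₁ x y ∨ r₂ x y) a b ↔ r₂ a b)) := by
  -- Normal form: every chain collapses to r₁, r₂, r₁;r₂, or r₂;r₁
  have key : ∀ a b, Relation.TransGen (fun x y => r₁ x y ∨ r₂ x y) a b →
      r₁ a b ∨ r₂ a b ∨ (∃ c, r₁ a c ∧ r₂ c b) ∨ (∃ c, r₂ a c ∧ r₁ c b) := by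
    intro a b h
    induction h with
    | single h =>
      rcases h with h | h
      · exact Or.inl h
      · exact Or.inr (Or.inl h)
    | tail _ hstep ih =>
      rename_i b c _
      rcases ih with h | h | ⟨x, hx1, hx2⟩ | ⟨x, hx1, hx2⟩ <;> rcases hstep with hs | hs
      · exact Or.inl (h₁trans _ _ _ h hs)
      · exact Or.inr (Or.inr (Or.inl ⟨b, h, hs⟩))
      · exact Or.inr (Or.inr (Or.inr ⟨b, h, hs⟩))
      · exact Or.inr (Or.inl (h₂trans _ _ _ h hs))
      · -- r₁ a x, r₂ x b, r₁ b c : x, b ∈ X₁ ∩ X₂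
        have hxmem : x ∈ X₁ ∩ X₂ := ⟨(h₁dom _ _ hx1).2, (h₂dom _ _ hx2).1⟩
        have hbmem : b ∈ X₁ ∩ X₂ := ⟨(h₁dom _ _ hs).1, (h₂dom _ _ hx2).2⟩
        have : r₁ x b := (hagree _ hxmem _ hbmem).mpr hx2
        exact Or.inl (h₁trans _ _ _ (h₁trans _ _ _ hx1 this) hs)
      · exact Or.inr (Or.inr (Or.inl ⟨x, hx1, h₂trans _ _ _ hx2 hs⟩))
      · exact Or.inr (Or.inr (Or.inr ⟨x, hx1, h₁trans _ _ _ hx2 hs⟩))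
      · -- r₂ a x, r₁ x b, r₂ b c : x, b ∈ X₁ ∩ X₂
        have hxmem : x ∈ X₁ ∩ X₂ := ⟨(h₁dom _ _ hx2).1, (h₂dom _ _ hx1).2⟩
        have hbmem : b ∈ X₁ ∩ X₂ := ⟨(h₁dom _ _ hx2).2, (h₂dom _ _ hs).1⟩
        have : r₂ x b := (hagree _ hxmem _ hbmem).mp hx2
        exact Or.inr (Or.inl (h₂trans _ _ _ (h₂trans _ _ _ hx1 this) hs))
  constructor
  · intro a ha b hb
    constructor
    · intro h
      rcases key a b h with h | h | ⟨x, hx1, hx2⟩ | ⟨x, hx1, hx2⟩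
      · exact h
      · exact (hagree a ⟨ha, (h₂dom _ _ h).1⟩ b ⟨hb, (h₂dom _ _ h).2⟩).mpr h
      · have hxmem : x ∈ X₁ ∩ X₂ := ⟨(h₁dom _ _ hx1).2, (h₂dom _ _ hx2).1⟩
        have : r₁ x b := (hagree _ hxmem _ ⟨hb, (h₂dom _ _ hx2).2⟩).mpr hx2
        exact h₁trans _ _ _ hx1 this
      · have hxmem : x ∈ X₁ ∩ X₂ := ⟨(h₁dom _ _ hx2).1, (h₂dom _ _ hx1).2⟩
        have : r₁ a x := (hagree _ ⟨ha, (h₂dom _ _ hx1).1⟩ _ hxmem).mpr hx1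
        exact h₁trans _ _ _ this hx2
    · intro h; exact Relation.TransGen.single (Or.inl h)
  · intro a ha b hb
    constructor
    · intro h
      rcases key a b h with h | h | ⟨x, hx1, hx2⟩ | ⟨x, hx1, hx2⟩
      · exact (hagree a ⟨(h₁dom _ _ h).1, ha⟩ b ⟨(h₁dom _ _ h).2, hb⟩).mp h
      · exact h
      · have hxmem : x ∈ X₁ ∩ X₂ := ⟨(h₁dom _ _ hx1).2, (h₂dom _ _ hx2).1⟩
        have : r₂ a x := (hagree _ ⟨(h₁dom _ _ hx1).1, ha⟩ _ hxmem).mp hx1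
        exact h₂trans _ _ _ this hx2
      · have hxmem : x ∈ X₁ ∩ X₂ := ⟨(h₁dom _ _ hx2).1, (h₂dom _ _ hx1).2⟩
        have : r₂ x b := (hagree _ hxmem _ ⟨(h₁dom _ _ hx2).2, hb⟩).mp hx2
        exact h₂trans _ _ _ hx1 this
    · intro h; exact Relation.TransGen.single (Or.inr h)
end

section
/- If a₁ < a₂ in the transitive closure of the union of two transitive relations <₁ on X₁ and <₂ on X₂ agreeing on X₁ ∩ X₂, then one of the following holds: (1) a₁ <ᵢ a₂ for i = 1 or 2; (2) a₁ ∈ X₁ \ X₂, a₂ ∈ X₂ \ X₁, and a₁ <₁ c <₂ a₂ for some c ∈ X₁ ∩ X₂; (3) a₁ ∈ X₂ \ X₁, a₂ ∈ X₁ \ X₂, and a₁ <₂ c <₁ a₂ for some c ∈ X₁ ∩ X₂. -/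
/-- If a₁ < a₂ in the transitive closure of the union of two transitive
relations <₁ on X₁ and <₂ on X₂ agreeing on X₁ ∩ X₂, then either a₁ <ᵢ a₂ for some i,
or a₁ ∈ X₁ \ X₂, a₂ ∈ X₂ \ X₁ and a₁ <₁ c <₂ a₂ for some c ∈ X₁ ∩ X₂, or symmetrically. -/
theorem stmt_4 {α : Type*} (X₁ X₂ : Set α) (r₁ r₂ : α → α → Prop)
    (h₁dom : ∀ a b, r₁ a b → a ∈ X₁ ∧ b ∈ X₁)
    (h₂dom : ∀ a b, r₂ a b → a ∈ X₂ ∧ b ∈ X₂)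
    (h₁trans : ∀ a b c, r₁ a b → r₁ b c → r₁ a c)
    (h₂trans : ∀ a b c, r₂ a b → r₂ b c → r₂ a c)
    (hagree : ∀ a ∈ X₁ ∩ X₂, ∀ b ∈ X₁ ∩ X₂, (r₁ a b ↔ r₂ a b))
    (a₁ a₂ : α)
    (h : Relation.TransGen (fun x y => r₁ x y ∨ r₂ x y) a₁ a₂) :
    (r₁ a₁ a₂ ∨ r₂ a₁ a₂) ∨
    (a₁ ∈ X₁ \ X₂ ∧ a₂ ∈ X₂ \ X₁ ∧ ∃ c ∈ X₁ ∩ X₂, r₁ a₁ c ∧ r₂ c a₂) ∨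
    (a₁ ∈ X₂ \ X₁ ∧ a₂ ∈ X₁ \ X₂ ∧ ∃ c ∈ X₁ ∩ X₂, r₂ a₁ c ∧ r₁ c a₂) := by
  induction h with
  | single hb => exact Or.inl hb
  | tail _hab hstep ih =>
    rename_i b a₂
    rcases ih with (h1 | h2) | ⟨⟨ha1, hna2⟩, ⟨hb2, hnb1⟩, c, hc, hr1, hr2⟩ |
        ⟨⟨ha2, hna1⟩, ⟨hb1, hnb2⟩, c, hc, hr2, hr1⟩
    · -- r₁ a₁ b
      rcases hstep with hs1 | hs2
      · exact Or.inl (Or.inl (h₁trans _ _ _ h1 hs1))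
      · have ha1 : a₁ ∈ X₁ := (h₁dom _ _ h1).1
        have hb1 : b ∈ X₁ := (h₁dom _ _ h1).2
        have hb2 : b ∈ X₂ := (h₂dom _ _ hs2).1
        have ha2₂ : a₂ ∈ X₂ := (h₂dom _ _ hs2).2
        by_cases ha12 : a₁ ∈ X₂
        · exact Or.inl (Or.inr (h₂trans _ _ _
            ((hagree a₁ ⟨ha1, ha12⟩ b ⟨hb1, hb2⟩).1 h1) hs2))
        · by_cases ha21 : a₂ ∈ X₁
          · exact Or.inl (Or.inl (h₁trans _ _ _ h1
              ((hagree b ⟨hb1, hb2⟩ a₂ ⟨ha21, ha2₂⟩).2 hs2)))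
          · exact Or.inr (Or.inl ⟨⟨ha1, ha12⟩, ⟨ha2₂, ha21⟩, b, ⟨hb1, hb2⟩, h1, hs2⟩)
    · -- r₂ a₁ b (symmetric)
      rcases hstep with hs1 | hs2
      · have ha1 : a₁ ∈ X₂ := (h₂dom _ _ h2).1
        have hb2 : b ∈ X₂ := (h₂dom _ _ h2).2
        have hb1 : b ∈ X₁ := (h₁dom _ _ hs1).1
        have ha2₁ : a₂ ∈ X₁ := (h₁dom _ _ hs1).2
        by_cases ha11 : a₁ ∈ X₁
        · exact Or.inl (Or.inl (h₁trans _ _ _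
            ((hagree a₁ ⟨ha11, ha1⟩ b ⟨hb1, hb2⟩).2 h2) hs1))
        · by_cases ha22 : a₂ ∈ X₂
          · exact Or.inl (Or.inr (h₂trans _ _ _ h2
              ((hagree b ⟨hb1, hb2⟩ a₂ ⟨ha2₁, ha22⟩).1 hs1)))
          · exact Or.inr (Or.inr ⟨⟨ha1, ha11⟩, ⟨ha2₁, ha22⟩, b, ⟨hb1, hb2⟩, h2, hs1⟩)
      · exact Or.inl (Or.inr (h₂trans _ _ _ h2 hs2))
    · -- case 2: a₁ ∈ X₁ \ X₂, b ∈ X₂ \ X₁, via c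
      rcases hstep with hs1 | hs2
      · exact absurd (h₁dom _ _ hs1).1 hnb1
      · have hr2' := h₂trans _ _ _ hr2 hs2
        have ha2₂ : a₂ ∈ X₂ := (h₂dom _ _ hs2).2
        by_cases ha21 : a₂ ∈ X₁
        · exact Or.inl (Or.inl (h₁trans _ _ _ hr1
            ((hagree c hc a₂ ⟨ha21, ha2₂⟩).2 hr2')))
        · exact Or.inr (Or.inl ⟨⟨ha1, hna2⟩, ⟨ha2₂, ha21⟩, c, hc, hr1, hr2'⟩)
    · -- case 3: symmetric
      rcases hstep with hs1 | hs2
      · have hr1' := h₁trans _ _ _ hr1 hs1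
        have ha2₁ : a₂ ∈ X₁ := (h₁dom _ _ hs1).2
        by_cases ha22 : a₂ ∈ X₂
        · exact Or.inl (Or.inr (h₂trans _ _ _ hr2
            ((hagree c hc a₂ ⟨ha2₁, ha22⟩).1 hr1')))
        · exact Or.inr (Or.inr ⟨⟨ha2, hna1⟩, ⟨ha2₁, ha22⟩, c, hc, hr2, hr1'⟩)
      · exact absurd (h₂dom _ _ hs2).1 hnb2
end

section
/- A triangle relation on a set M determines a labeled switchboard structure on M: if ⊲ is a relation on M ⊔ [M]² satisfying the triangle axioms, and one defines {x,y} < {z,w} iff {x,y} ⊲ {z,w}, x ↑ {y,z} iff x ⊲ {y,z}, and x ↓ {y,z} iff x ∉ {y,z} and not x ↑ {y,z}, then (M, <, ↑, ↓) is a labeled switchboard. -/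
/-- A switchboard: a strict partial order on the edges `[M]²` (non-diagonal elements of
`Sym2 M`) in which any two edges sharing a vertex are incomparable. -/
structure IsSwitchboard {M : Type*} (lt : Sym2 M → Sym2 M → Prop) : Prop where
  lt_dom : ∀ e f, lt e f → ¬ e.IsDiag ∧ ¬ f.IsDiag
  lt_irrefl : ∀ e, ¬ lt e e
  lt_trans : ∀ e f g, lt e f → lt f g → lt e g
  switchboard : ∀ x y z : M, ¬ lt s(x, y) s(x, z)

/-- A labeled switchboard: a switchboard together with relations `up` ("favors") and
`down` ("disfavors") between `M` and `[M]²` satisfying the Trichotomy, Upward and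
Downward axioms. -/
structure IsLabeledSwitchboard {M : Type*} (lt : Sym2 M → Sym2 M → Prop)
    (up down : M → Sym2 M → Prop) : Prop where
  lt_dom : ∀ e f, lt e f → ¬ e.IsDiag ∧ ¬ f.IsDiag
  up_dom : ∀ x e, up x e → ¬ e.IsDiag
  down_dom : ∀ x e, down x e → ¬ e.IsDiag
  lt_irrefl : ∀ e, ¬ lt e e
  lt_trans : ∀ e f g, lt e f → lt f g → lt e g
  switchboard : ∀ x y z : M, ¬ lt s(x, y) s(x, z)
  trichotomy : ∀ (x : M) (e : Sym2 M), ¬ e.IsDiag →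
    (up x e ∨ x ∈ e ∨ down x e) ∧ ¬ (up x e ∧ x ∈ e) ∧
      ¬ (up x e ∧ down x e) ∧ ¬ (x ∈ e ∧ down x e)
  upward : ∀ x e f, up x e → lt e f → up x f
  downward : ∀ x e f, down x e → lt f e → down x f

/-- A triangle relation `⊲` on `M ⊔ [M]²` (transitive; `{x,y} ⊲ b` implies
`x ⊲ b`; anything related is below an edge; irreflexive; never `x ⊲ {x,y}`) determines a
labeled switchboard structure on `M` via `e < f ↔ e ⊲ f`, `x ↑ e ↔ x ⊲ e`, and
`x ↓ e ↔ (x ∉ e ∧ ¬ x ↑ e)` (for edges e). -/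
theorem stmt_5 {M : Type*} (tri : (M ⊕ Sym2 M) → (M ⊕ Sym2 M) → Prop)
    (htrans : ∀ a b c, tri a b → tri b c → tri a c)
    (hproj : ∀ (x y : M) (b : M ⊕ Sym2 M), tri (.inr s(x, y)) b → tri (.inl x) b)
    (hrange : ∀ a b, tri a b → ∃ e : Sym2 M, b = .inr e ∧ ¬ e.IsDiag)
    (hirr : ∀ a, ¬ tri a a)
    (hnotself : ∀ x y : M, ¬ tri (.inl x) (.inr s(x, y)))
    (hdom : ∀ (e : Sym2 M) (b : M ⊕ Sym2 M), tri (.inr e) b → ¬ e.IsDiag) :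
    IsLabeledSwitchboard
      (fun e f => tri (.inr e) (.inr f))
      (fun x e => tri (.inl x) (.inr e))
      (fun x e => ¬ e.IsDiag ∧ x ∉ e ∧ ¬ tri (.inl x) (.inr e)) := by
  constructor
  · intro e f h
    obtain ⟨e', he, hd⟩ := hrange _ _ h
    exact ⟨hdom _ _ h, by injection he with h'; exact h' ▸ hd⟩
  · intro x e h
    obtain ⟨e', he, hd⟩ := hrange _ _ h
    injection he with h'; exact h' ▸ hd
  · intro x e h; exact h.1
  · intro e; exact hirr _
  · intro e f g hef hfg; exact htrans _ _ _ hef hfg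
  · intro x y z h
    exact hnotself x z (hproj x y _ h)
  · intro x e he
    refine ⟨?_, ?_, ?_, ?_⟩
    · by_cases hu : tri (.inl x) (.inr e)
      · exact Or.inl hu
      · by_cases hm : x ∈ e
        · exact Or.inr (Or.inl hm)
        · exact Or.inr (Or.inr ⟨he, hm, hu⟩)
    · rintro ⟨hu, hm⟩
      obtain ⟨y, rfl⟩ := Sym2.mem_iff_exists.mp hm
      exact hnotself x y hu
    · rintro ⟨hu, _, _, hd⟩; exact hd hu
    · rintro ⟨hm, _, hd, _⟩; exact hd hm
  · intro x e f hu hl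
    exact htrans _ _ _ hu hl
  · intro x e f ⟨he, hm, hu⟩ hl
    refine ⟨hdom _ _ hl, ?_, fun h => hu (htrans _ _ _ h hl)⟩
    intro hmf
    obtain ⟨y, rfl⟩ := Sym2.mem_iff_exists.mp hmf
    exact hu (hproj x y _ hl)
end

section
/- Every labeled switchboard (M, <, ↑, ↓) gives rise to a triangle relation: define x ⊲ y iff (x ∈ M, y ∈ [M]², and x ↑ y) or (x, y ∈ [M]² and x < y). Then ⊲ satisfies the five triangle axioms. -/
/-- The triangle relation associated to a labeled switchboard: `x ⊲ e` iff `x ↑ e`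
(for `x ∈ M`, `e ∈ [M]²`), and `e ⊲ f` iff `e < f` (for edges `e, f`). -/
def triOf {M : Type*} (lt : Sym2 M → Sym2 M → Prop) (up : M → Sym2 M → Prop) :
    (M ⊕ Sym2 M) → (M ⊕ Sym2 M) → Prop
  | .inl x, .inr e => up x e
  | .inr e, .inr f => lt e f
  | _, _ => False

/-- Every labeled switchboard gives rise to a triangle relation: the relation
`triOf lt up` satisfies the five triangle axioms. -/
theorem stmt_6 {M : Type*} (lt : Sym2 M → Sym2 M → Prop) (up down : M → Sym2 M → Prop)
    (h : IsLabeledSwitchboard lt up down) :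
    (∀ a b c, triOf lt up a b → triOf lt up b c → triOf lt up a c) ∧
    (∀ (x y : M) (b : M ⊕ Sym2 M), triOf lt up (.inr s(x, y)) b → triOf lt up (.inl x) b) ∧
    (∀ a b, triOf lt up a b → ∃ e : Sym2 M, b = .inr e) ∧
    (∀ a, ¬ triOf lt up a a) ∧
    (∀ x y : M, ¬ triOf lt up (.inl x) (.inr s(x, y))) := by
  refine ⟨?_, ?_, ?_, ?_, ?_⟩
  · rintro (x | e) (y | f) (z | g) h1 h2 <;> simp only [triOf] at * <;> try exact h1.elim
    · exact h.upward x f g h1 h2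
    · exact h.lt_trans e f g h1 h2
  · rintro x y (z | f) h1
    · exact h1.elim
    · simp only [triOf] at *
      have hf : ¬ f.IsDiag := (h.lt_dom _ _ h1).2
      have he : ¬ (s(x, y) : Sym2 M).IsDiag := (h.lt_dom _ _ h1).1
      rcases (h.trichotomy x f hf).1 with hu | hm | hd
      · exact hu
      · obtain ⟨z, rfl⟩ : ∃ z, f = s(x, z) := by
          induction f with
          | _ a b =>
            rcases Sym2.mem_iff.mp hm with rfl | rfl
            · exact ⟨b, rfl⟩
            · exact ⟨a, Sym2.eq_swap.symm⟩
        exact absurd h1 (h.switchboard x y z)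
      · have := h.downward x f _ hd h1
        exact absurd ⟨Sym2.mem_mk_left x y, this⟩ (h.trichotomy x _ he).2.2.2
  · rintro (x | e) (y | f) h1 <;> first | exact h1.elim | exact ⟨_, rfl⟩
  · rintro (x | e) h1
    · exact h1.elim
    · exact h.lt_irrefl e h1
  · intro x y h1
    have he : ¬ (s(x, y) : Sym2 M).IsDiag := fun hd => by
      exact h.up_dom x _ h1 hd
    exact (h.trichotomy x _ he).2.1 ⟨h1, Sym2.mem_mk_left x y⟩
end

section
/- Every switchboard (M, <) can be expanded to a labeled switchboard (M, <, ↑, ↓): defining, for distinct a, x, y ∈ M, a ↑ {x,y} iff there exists z with {a,z} < {x,y}, and a ↓ {x,y} otherwise (when a ∉ {x,y}), yields relations satisfying the Trichotomy, Upward, and Downward axioms. -/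
/-- Every switchboard can be expanded to a labeled switchboard, by letting
`a ↑ e` iff `{a,z} < e` for some `z`, and `a ↓ e` otherwise (for `a` not in the edge `e`). -/
theorem stmt_8 {M : Type*} (lt : Sym2 M → Sym2 M → Prop) (h : IsSwitchboard lt) :
    IsLabeledSwitchboard lt
      (fun a e => ∃ z, lt s(a, z) e)
      (fun a e => ¬ e.IsDiag ∧ a ∉ e ∧ ¬ ∃ z, lt s(a, z) e) := by
  have key : ∀ (x : M) (e : Sym2 M), (∃ z, lt s(x, z) e) → x ∉ e := by
    rintro x e ⟨z, hz⟩ hx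
    obtain ⟨y, rfl⟩ := Sym2.mem_iff_exists.mp hx
    exact h.switchboard x z y hz
  refine ⟨h.lt_dom, ?_, ?_, h.lt_irrefl, h.lt_trans, h.switchboard, ?_, ?_, ?_⟩
  · rintro x e ⟨z, hz⟩; exact (h.lt_dom _ _ hz).2
  · rintro x e ⟨hd, _, _⟩; exact hd
  · intro x e he
    refine ⟨?_, ?_, ?_, ?_⟩
    · by_cases hm : x ∈ e
      · exact Or.inr (Or.inl hm)
      · by_cases hu : ∃ z, lt s(x, z) e
        · exact Or.inl hu
        · exact Or.inr (Or.inr ⟨he, hm, hu⟩)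
    · rintro ⟨hu, hm⟩; exact key x e hu hm
    · rintro ⟨hu, _, _, hn⟩; exact hn hu
    · rintro ⟨hm, _, hn, _⟩; exact hn hm
  · rintro x e f ⟨z, hz⟩ hef; exact ⟨z, h.lt_trans _ _ _ hz hef⟩
  · rintro x e f ⟨hd, hm, hn⟩ hfe
    refine ⟨(h.lt_dom _ _ hfe).1, ?_, ?_⟩
    · intro hx
      obtain ⟨y, rfl⟩ := Sym2.mem_iff_exists.mp hx
      exact hn ⟨y, hfe⟩
    · rintro ⟨z, hz⟩; exact hn ⟨z, h.lt_trans _ _ _ hz hfe⟩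
end

section
/- In a labeled switchboard M with finite subset B, suppose c₁, c₂, c₃ ∈ M \ B are distinct, every '<'-comparison and ↑/↓-fact involving cᵢ and elements of B is the same for all i (they have the same quantifier-free type over B), tp(c₂,c₃/B) is distinguished, and whenever c₁ ↑ {c₃,x} with x ∈ B there is an edge {u,v} ⊆ B ∪ {c₂} with c₁ ↑ {u,v} and {u,v} < {c₃,x}. Then c₁ ↑ {c₃,b} implies c₃ ↑ {c₁,b} for all b ∈ B. -/
/-- (Key step of Lemma on symmetry.) In a labeled switchboard with finite
subset `B`, if `c₁, c₂, c₃ ∉ B` are distinct with the same quantifier-free type over `B`,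
`tp(c₂,c₃/B)` is distinguished, and every instance of `c₁ ↑ {c₃,x}` (`x ∈ B`) is witnessed
by an edge `{u,v} ⊆ B ∪ {c₂}` with `c₁ ↑ {u,v} < {c₃,x}`, then `c₁ ↑ {c₃,b}` implies
`c₃ ↑ {c₁,b}` for all `b ∈ B`. -/
theorem stmt_19 {M : Type*} (lt : Sym2 M → Sym2 M → Prop) (up down : M → Sym2 M → Prop)
    (h : IsLabeledSwitchboard lt up down)
    (B : Finset M) (c₁ c₂ c₃ : M)
    (hdistinct : c₁ ≠ c₂ ∧ c₁ ≠ c₃ ∧ c₂ ≠ c₃)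
    (hc₁B : c₁ ∉ B) (hc₂B : c₂ ∉ B) (hc₃B : c₃ ∉ B)
    -- same quantifier-free type over B
    (hsame : ∀ x ∈ ({c₁, c₂, c₃} : Set M), ∀ y ∈ ({c₁, c₂, c₃} : Set M),
      ∀ b ∈ B, ∀ u ∈ B, ∀ v ∈ B,
        ((lt s(x, b) s(u, v) ↔ lt s(y, b) s(u, v)) ∧
         (lt s(u, v) s(x, b) ↔ lt s(u, v) s(y, b)) ∧
         (up x s(u, v) ↔ up y s(u, v)) ∧
         (down x s(u, v) ↔ down y s(u, v)) ∧
         (up b s(x, u) ↔ up b s(y, u)) ∧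
         (down b s(x, u) ↔ down b s(y, u))))
    -- tp(c₂, c₃ / B) is distinguished
    (hdist : ∀ b ∈ B, ∀ c ∈ B,
      (lt s(c₂, b) s(c₃, c) →
        ∃ u ∈ B, ∃ v ∈ B, u ≠ v ∧ lt s(c₂, b) s(u, v) ∧ lt s(u, v) s(c₃, c)) ∧
      (lt s(c₃, c) s(c₂, b) →
        ∃ u ∈ B, ∃ v ∈ B, u ≠ v ∧ lt s(c₃, c) s(u, v) ∧ lt s(u, v) s(c₂, b)))
    -- free-amalgamation witness condition
    (hfree : ∀ x ∈ B, up c₁ s(c₃, x) →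
      ∃ u ∈ (B : Set M) ∪ {c₂}, ∃ v ∈ (B : Set M) ∪ {c₂},
        u ≠ v ∧ up c₁ s(u, v) ∧ lt s(u, v) s(c₃, x)) :
    ∀ b ∈ B, up c₁ s(c₃, b) → up c₃ s(c₁, b) := by
  intro b hb hup
  have hc₁ : c₁ ∈ ({c₁, c₂, c₃} : Set M) := by simp
  have hc₃ : c₃ ∈ ({c₁, c₂, c₃} : Set M) := by simp
  -- key step: if c₁ ↑ {u,v} with u,v ∈ B and {u,v} < {c₃,b}, then done
  have key : ∀ u ∈ B, ∀ v ∈ B, up c₁ s(u, v) → lt s(u, v) s(c₃, b) → up c₃ s(c₁, b) := by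
    intro u hu v hv hupuv hltuv
    have h1 : up c₃ s(u, v) :=
      ((hsame c₁ hc₁ c₃ hc₃ u hu u hu v hv).2.2.1).mp hupuv
    have h2 : lt s(u, v) s(c₁, b) :=
      ((hsame c₃ hc₃ c₁ hc₁ b hb u hu v hv).2.1).mp hltuv
    exact h.upward c₃ _ _ h1 h2
  obtain ⟨u, hu, v, hv, huv, hupuv, hltuv⟩ := hfree b hb hup
  rcases hu with hu | hu
  · rcases hv with hv | hv
    · exact key u hu v hv hupuv hltuv
    · -- v = c₂, u ∈ B
      simp only [Set.mem_singleton_iff] at hv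
      subst hv
      rw [Sym2.eq_swap] at hupuv hltuv
      obtain ⟨u', hu', v', hv', _, hl1, hl2⟩ := (hdist u hu b hb).1 hltuv
      have : up c₁ s(u', v') := h.upward c₁ _ _ hupuv hl1
      exact key u' hu' v' hv' this hl2
  · simp only [Set.mem_singleton_iff] at hu
    subst hu
    rcases hv with hv | hv
    · obtain ⟨u', hu', v', hv', _, hl1, hl2⟩ := (hdist v hv b hb).1 hltuv
      have : up c₁ s(u', v') := h.upward c₁ _ _ hupuv hl1
      exact key u' hu' v' hv' this hl2
    · simp only [Set.mem_singleton_iff] at hv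
      exact (huv hv.symm).elim
end
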